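/- Let n ∈ ℕ, f : [a,b] → ℝ have n−1 derivatives with f^{(n−1)} absolutely continuous, p integrable on [a,b], x ∈ [a,b]. Then ∫_a^b p(t) f(t) dt − Σ_{k=0}^{n−1} (1/k!) (∫_a^b p(t)(t−x)^k dt) f^{(k)}(x) = ∫_a^b r_x^n(t) f^{(n)}(t) dt, where r_x^n is defined recursively by r_x^0 = p and r_x^k = r_x(r_x^{k−1}). -/

import Mathlib

/-!
On each side of `x` the kernel `r_x^{k+1}` is an antiderivative of `-r_x^k` vanishing at the
adjacent endpoint, so interchanging the order of integration over the triangles below and above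
`x` gives `∫ r_x^k g = (∫ r_x^k) g(x) + ∫ r_x^{k+1} g'` whenever `g` is an indefinite integral
of `g'`. Iterating this with `g = f^{(k)}` proves the identity with coefficients `∫ r_x^k`;
applying the same identity to the polynomial `(t - x)^k` identifies `∫ r_x^k` with
`(1/k!) ∫ p(t) (t - x)^k dt`.
-/

open MeasureTheory intervalIntegral

/-- The kernels `r_x^k` (case `w ≡ 1`): `r_x^0 = p` and
`r_x^{k+1}(s) = −∫_a^s r_x^k` for `s ≤ x`, `∫_s^b r_x^k` for `s ≥ x`. -/
noncomputable def rk (a b x : ℝ) (p : ℝ → ℝ) : ℕ → ℝ → ℝ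
  | 0 => p
  | k + 1 => fun s =>
      if s ≤ x then -(∫ t in a..s, rk a b x p k t)
      else ∫ t in s..b, rk a b x p k t

open Set

theorem integral_primitive_mul_eq_integral_mul_integral {c d : ℝ} {u v : ℝ → ℝ}
    (hu : IntervalIntegrable u volume c d) (hv : IntervalIntegrable v volume c d) :
    ∫ s in c..d, (∫ t in c..s, u t) * v s = ∫ t in c..d, u t * ∫ s in t..d, v s := by
  have hU := hu.absolutelyContinuousOnInterval_intervalIntegral left_mem_uIcc
  have hV := hv.absolutelyContinuousOnInterval_intervalIntegral right_mem_uIcc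
  have parts := hU.integral_mul_deriv_eq_deriv_mul hV
  have hU' : ∀ᵐ s, s ∈ uIoc c d → deriv (fun s => ∫ t in c..s, u t) s = u s := by
    filter_upwards [hu.ae_hasDerivAt_integral] with s hs hsI
    exact (hs (uIoc_subset_uIcc hsI) c left_mem_uIcc).deriv
  have hV' : ∀ᵐ s, s ∈ uIoc c d → deriv (fun s => ∫ t in d..s, v t) s = v s := by
    filter_upwards [hv.ae_hasDerivAt_integral] with s hs hsI
    exact (hs (uIoc_subset_uIcc hsI) d right_mem_uIcc).deriv
  rw [integral_same, integral_same, mul_zero, zero_mul, sub_zero, zero_sub] at parts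
  calc ∫ s in c..d, (∫ t in c..s, u t) * v s
      = ∫ s in c..d, (∫ t in c..s, u t) * deriv (fun s => ∫ t in d..s, v t) s := by
        refine integral_congr_ae ?_
        filter_upwards [hV'] with s hs hsI
        rw [hs hsI]
    _ = -∫ t in c..d, u t * ∫ s in d..t, v s := by
        rw [parts]
        congr 1
        refine integral_congr_ae ?_
        filter_upwards [hU'] with s hs hsI
        rw [hs hsI]
    _ = ∫ t in c..d, u t * ∫ s in t..d, v s := by
        simp_rw [integral_symm _ d, mul_neg, intervalIntegral.integral_neg, neg_neg]

section Kernel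

variable {a b x : ℝ} {p : ℝ → ℝ}

theorem rk_succ_of_le {k : ℕ} {s : ℝ} (hs : s ≤ x) :
    rk a b x p (k + 1) s = -∫ t in a..s, rk a b x p k t := if_pos hs

theorem rk_succ_of_lt {k : ℕ} {s : ℝ} (hs : x < s) :
    rk a b x p (k + 1) s = ∫ t in s..b, rk a b x p k t := if_neg hs.not_ge

theorem IntervalIntegrable.rk_succ_mul {k : ℕ} {h : ℝ → ℝ} (hax : a ≤ x) (hxb : x ≤ b)
    (hk : IntervalIntegrable (rk a b x p k) volume a b) (hh : IntervalIntegrable h volume a b) :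
    IntervalIntegrable (fun s => rk a b x p (k + 1) s * h s) volume a b := by
  have hx : x ∈ uIcc a b := Icc_subset_uIcc ⟨hax, hxb⟩
  have hleft : IntervalIntegrable (fun s => (-∫ t in a..s, rk a b x p k t) * h s) volume a x :=
    (hh.mono_set (uIcc_subset_uIcc left_mem_uIcc hx)).continuousOn_mul
      (continuousOn_primitive_interval' hk left_mem_uIcc |>.mono
        (uIcc_subset_uIcc left_mem_uIcc hx)).neg
  have hright : IntervalIntegrable (fun s => (∫ t in s..b, rk a b x p k t) * h s) volume x b := by
    refine (hh.mono_set (uIcc_subset_uIcc hx right_mem_uIcc)).continuousOn_mul ?_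
    simp_rw [integral_symm b]
    exact (continuousOn_primitive_interval' hk right_mem_uIcc |>.mono
      (uIcc_subset_uIcc hx right_mem_uIcc)).neg
  refine (hleft.congr fun s hs => ?_).trans (hright.congr fun s hs => ?_)
  · rw [uIoc_of_le hax] at hs
    simp only [rk_succ_of_le hs.2]
  · rw [uIoc_of_le hxb] at hs
    simp only [rk_succ_of_lt hs.1]

theorem intervalIntegrable_rk (hax : a ≤ x) (hxb : x ≤ b)
    (hp : IntervalIntegrable p volume a b) (k : ℕ) :
    IntervalIntegrable (rk a b x p k) volume a b := by
  induction k with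
  | zero => exact hp
  | succ k ih => simpa using ih.rk_succ_mul hax hxb (intervalIntegrable_const (c := (1 : ℝ)))

theorem integral_rk_mul_primitive (hax : a ≤ x) (hxb : x ≤ b)
    (hp : IntervalIntegrable p volume a b) (k : ℕ) {h : ℝ → ℝ}
    (hh : IntervalIntegrable h volume a b) :
    ∫ s in a..b, rk a b x p k s * (∫ t in x..s, h t)
      = ∫ s in a..b, rk a b x p (k + 1) s * h s := by
  have hx : x ∈ uIcc a b := Icc_subset_uIcc ⟨hax, hxb⟩
  have hR := intervalIntegrable_rk hax hxb hp k
  have hlhs := hR.mul_continuousOn (continuousOn_primitive_interval' hh hx)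
  have hrhs := hR.rk_succ_mul hax hxb hh
  have hax' := uIcc_subset_uIcc left_mem_uIcc hx
  have hxb' := uIcc_subset_uIcc hx right_mem_uIcc
  rw [← integral_add_adjacent_intervals (hlhs.mono_set hax') (hlhs.mono_set hxb'),
    ← integral_add_adjacent_intervals (hrhs.mono_set hax') (hrhs.mono_set hxb')]
  congr 1
  · calc ∫ s in a..x, rk a b x p k s * (∫ t in x..s, h t)
        = -∫ t in a..x, rk a b x p k t * ∫ s in t..x, h s := by
          rw [← intervalIntegral.integral_neg]
          refine integral_congr fun s _ => ?_
          rw [integral_symm s x, mul_neg]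
      _ = -∫ s in a..x, (∫ t in a..s, rk a b x p k t) * h s := by
          rw [integral_primitive_mul_eq_integral_mul_integral (hR.mono_set hax') (hh.mono_set hax')]
      _ = ∫ s in a..x, rk a b x p (k + 1) s * h s := by
          rw [← intervalIntegral.integral_neg]
          refine integral_congr fun s hs => ?_
          rw [uIcc_of_le hax] at hs
          simp only [rk_succ_of_le hs.2, neg_mul]
  · calc ∫ s in x..b, rk a b x p k s * (∫ t in x..s, h t)
        = ∫ s in x..b, (∫ t in x..s, h t) * rk a b x p k s := by simp_rw [mul_comm]
      _ = ∫ t in x..b, h t * ∫ s in t..b, rk a b x p k s :=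
          integral_primitive_mul_eq_integral_mul_integral (hh.mono_set hxb') (hR.mono_set hxb')
      _ = ∫ s in x..b, rk a b x p (k + 1) s * h s := by
          refine integral_congr_ae (Filter.Eventually.of_forall fun s hs => ?_)
          rw [uIoc_of_le hxb] at hs
          rw [rk_succ_of_lt hs.1, mul_comm]

theorem integral_rk_mul_eq_add_integral_rk_succ_mul (hax : a ≤ x) (hxb : x ≤ b)
    (hp : IntervalIntegrable p volume a b) (k : ℕ) {g h : ℝ → ℝ}
    (hh : IntervalIntegrable h volume a b)
    (hg : ∀ y ∈ Icc a b, g y = g x + ∫ t in x..y, h t) :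
    ∫ t in a..b, rk a b x p k t * g t
      = (∫ t in a..b, rk a b x p k t) * g x + ∫ t in a..b, rk a b x p (k + 1) t * h t := by
  have hx : x ∈ uIcc a b := Icc_subset_uIcc ⟨hax, hxb⟩
  have hR := intervalIntegrable_rk hax hxb hp k
  rw [← integral_rk_mul_primitive hax hxb hp k hh, ← intervalIntegral.integral_mul_const,
    ← integral_add (hR.mul_const _)
      (hR.mul_continuousOn (continuousOn_primitive_interval' hh hx))]
  refine integral_congr fun y hy => ?_
  rw [uIcc_of_le (hax.trans hxb)] at hy
  simp only [hg y hy, mul_add]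

theorem integral_mul_sub_sum_eq_integral_rk_mul (hax : a ≤ x) (hxb : x ≤ b)
    (hp : IntervalIntegrable p volume a b) {n : ℕ} {fd : ℕ → ℝ → ℝ}
    (hint : ∀ k < n, IntervalIntegrable (fd (k + 1)) volume a b)
    (hFTC : ∀ k < n, ∀ y ∈ Icc a b, fd k y = fd k a + ∫ t in a..y, fd (k + 1) t) :
    (∫ t in a..b, p t * fd 0 t)
        - ∑ k ∈ Finset.range n, (∫ t in a..b, rk a b x p k t) * fd k x
      = ∫ t in a..b, rk a b x p n t * fd n t := by
  induction n with
  | zero => simp [rk]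
  | succ n ih =>
    have hFTCx : ∀ y ∈ Icc a b, fd n y = fd n x + ∫ t in x..y, fd (n + 1) t := by
      intro y hy
      have hn := hint n n.lt_succ_self
      have hnx := hn.mono_set (uIcc_subset_uIcc_left (Icc_subset_uIcc ⟨hax, hxb⟩))
      have hny := hn.mono_set (uIcc_subset_uIcc_left (Icc_subset_uIcc hy))
      rw [hFTC n n.lt_succ_self y hy, hFTC n n.lt_succ_self x ⟨hax, hxb⟩,
        ← integral_interval_sub_left hny hnx]
      ring
    rw [Finset.sum_range_succ, ← sub_sub, ih (fun k hk => hint k (hk.trans n.lt_succ_self))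
      (fun k hk => hFTC k (hk.trans n.lt_succ_self)),
      integral_rk_mul_eq_add_integral_rk_succ_mul hax hxb hp n (hint n n.lt_succ_self) hFTCx,
      add_sub_cancel_left]

theorem integral_rk_eq_integral_mul_pow_div_factorial (hax : a ≤ x) (hxb : x ≤ b)
    (hp : IntervalIntegrable p volume a b) (k : ℕ) :
    ∫ t in a..b, rk a b x p k t = (∫ t in a..b, p t * (t - x) ^ k) / k.factorial := by
  set P : ℕ → ℝ → ℝ := fun i => iteratedDeriv i (fun t => (t - x) ^ k)
  have hP : ∀ i t, P i t = k.descFactorial i * (t - x) ^ (k - i) := by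
    intro i t
    simp [P, iteratedDeriv_comp_sub_const i (· ^ k)]
  have hcont : ∀ i, Continuous (P i) := fun i => by rw [funext (hP i)]; fun_prop
  have hP_ftc : ∀ i, ∀ y, P i y = P i a + ∫ t in a..y, P (i + 1) t := by
    intro i y
    have hderiv : ∀ t, HasDerivAt (P i) (P (i + 1) t) t := fun t => by
      have hdiff : Differentiable ℝ (P i) := by rw [funext (hP i)]; fun_prop
      simpa only [P, iteratedDeriv_succ] using (hdiff t).hasDerivAt
    rw [integral_eq_sub_of_hasDerivAt (fun t _ => hderiv t) ((hcont _).intervalIntegrable _ _)]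
    ring
  have taylor := integral_mul_sub_sum_eq_integral_rk_mul hax hxb hp (n := k) (fd := P)
    (fun i _ => (hcont _).intervalIntegrable _ _) (fun i _ y _ => hP_ftc i y)
  have hsum : ∑ i ∈ Finset.range k, (∫ t in a..b, rk a b x p i t) * P i x = 0 :=
    Finset.sum_eq_zero fun i hi => by
      rw [hP, sub_self, zero_pow (Nat.sub_ne_zero_of_lt (Finset.mem_range.mp hi)), mul_zero,
        mul_zero]
  have hP0 : P 0 = fun t => (t - x) ^ k := funext fun t => by simp [hP]
  have hPk : P k = fun _ => (k.factorial : ℝ) := funext fun t => by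
    simp [hP, Nat.descFactorial_self]
  rw [hsum, sub_zero, hP0, hPk, intervalIntegral.integral_mul_const] at taylor
  rw [taylor, mul_div_cancel_right₀ _ (by positivity)]

end Kernel

theorem stmt5_general (a b : ℝ) (n : ℕ)
    (p : ℝ → ℝ) (hp : IntervalIntegrable p volume a b)
    (x : ℝ) (hx : x ∈ Set.Icc a b)
    (f : ℝ → ℝ) (fd : ℕ → ℝ → ℝ) (h0 : fd 0 = f)
    (hint : ∀ k < n, IntervalIntegrable (fd (k + 1)) volume a b)
    (hFTC : ∀ k < n, ∀ y ∈ Set.Icc a b, fd k y = fd k a + ∫ t in a..y, fd (k + 1) t) :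
    (∫ t in a..b, p t * f t)
        - ∑ k ∈ Finset.range n,
            (1 / (Nat.factorial k : ℝ)) * (∫ t in a..b, p t * (t - x) ^ k) * fd k x
      = ∫ t in a..b, rk a b x p n t * fd n t := by
  obtain ⟨hax, hxb⟩ := hx
  rw [← integral_mul_sub_sum_eq_integral_rk_mul hax hxb hp hint hFTC, h0]
  congr 1
  refine Finset.sum_congr rfl fun k _ => ?_
  rw [integral_rk_eq_integral_mul_pow_div_factorial hax hxb hp k]
  ring

/-- Taylor-type integral representation: if `f` has `n−1` derivatives with `f^{(n−1)}`
absolutely continuous (encoded via the derivative functions `fd k` and the fundamental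
theorem of calculus) and `p` is integrable, then
`∫ p f − Σ_{k<n} (1/k!)(∫ p(t)(t−x)^k dt) f^{(k)}(x) = ∫ r_x^n f^{(n)}`. -/
theorem stmt5 (a b : ℝ) (hab : a < b) (n : ℕ) (hn : 1 ≤ n)
    (p : ℝ → ℝ) (hp : IntervalIntegrable p volume a b)
    (x : ℝ) (hx : x ∈ Set.Icc a b)
    (f : ℝ → ℝ) (fd : ℕ → ℝ → ℝ) (h0 : fd 0 = f)
    (hint : ∀ k < n, IntervalIntegrable (fd (k + 1)) volume a b)
    (hFTC : ∀ k < n, ∀ y ∈ Set.Icc a b, fd k y = fd k a + ∫ t in a..y, fd (k + 1) t) :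
    (∫ t in a..b, p t * f t)
        - ∑ k ∈ Finset.range n,
            (1 / (Nat.factorial k : ℝ)) * (∫ t in a..b, p t * (t - x) ^ k) * fd k x
      = ∫ t in a..b, rk a b x p n t * fd n t :=
  stmt5_general a b n p hp x hx f fd h0 hint hFTC
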